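/- Let d ≥ 1, C_g > 0, λ ≥ C_g², C_h ≥ 0, T ≥ 1, and let g_1, …, g_T ∈ ℝ^d satisfy ‖g_t‖₂ ≤ C_g for all 1 ≤ t ≤ T. For 1 ≤ t ≤ T define Σ_t = λI + Σ_{i=1}^{t-1} g_i g_iᵀ and u_t = ‖g_t‖_{Σ_t^{-1}}. Let 0 < β_1 ≤ β_2 ≤ … ≤ β_T be a nondecreasing sequence, and let r_1, …, r_T be nonnegative reals satisfying r_t ≤ 2√(β_t)·u_t + 2β_t C_h/λ for every t. Then Σ_{t=1}^T r_t² ≤ 16 β_T d · log(1 + T·C_g²/(d·λ)) + 8 β_T² C_h² T / λ². -/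

import Mathlib

open Matrix Finset

/-!
The instantaneous bound gives `r_t² ≤ 8 β_T u_t² + 8 β_T² C_h² / λ²`, so it suffices to show
`∑ u_t² ≤ 2 d log (1 + T C_g² / (d λ))` (elliptical potential lemma). Since `Σ_t ≥ λ I` and
`λ ≥ C_g²`, each `u_t² ≤ 1`, hence `u_t² ≤ 2 log (1 + u_t²)`. By the matrix determinant lemma
`det Σ_{t+1} = det Σ_t (1 + u_t²)`, so `∑ log (1 + u_t²)` telescopes to `log det Σ_{T+1} - d log λ`,
and AM-GM on the eigenvalues bounds `det Σ_{T+1}` by `(tr Σ_{T+1} / d) ^ d ≤ (λ + T C_g² / d) ^ d`.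
-/

theorem Real.prod_le_sum_div_card_pow {ι : Type*} [Fintype ι] {z : ι → ℝ} (hz : ∀ i, 0 ≤ z i) :
    ∏ i, z i ≤ ((∑ i, z i) / Fintype.card ι) ^ Fintype.card ι := by
  cases isEmpty_or_nonempty ι
  · simp
  have hcard : (0 : ℝ) < Fintype.card ι := by exact_mod_cast Fintype.card_pos
  have hamgm := Real.geom_mean_le_arith_mean univ (fun _ ↦ 1) z (by simp) (by simpa using hcard)
    (fun i _ ↦ hz i)
  simp only [Real.rpow_one, sum_const, card_univ, nsmul_eq_mul, mul_one, one_mul] at hamgm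
  rw [Real.rpow_inv_le_iff_of_pos (prod_nonneg fun i _ ↦ hz i)
    (div_nonneg (sum_nonneg fun i _ ↦ hz i) hcard.le) hcard, Real.rpow_natCast] at hamgm
  exact hamgm

theorem Real.le_two_mul_log_one_add {x : ℝ} (h0 : 0 ≤ x) (h2 : x ≤ 2) :
    x ≤ 2 * Real.log (1 + x) := by
  have h := Real.le_log_one_add_of_nonneg h0
  rw [div_le_iff₀ (by linarith)] at h
  nlinarith

namespace Matrix

variable {n : Type*} [Fintype n]

theorem posSemidef_sum_vecMulVec_self {ι : Type*} (s : Finset ι) (v : ι → n → ℝ) :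
    (∑ i ∈ s, vecMulVec (v i) (v i)).PosSemidef :=
  posSemidef_sum s fun i _ ↦ by simpa using posSemidef_vecMulVec_self_star (v i)

variable [DecidableEq n]

theorem PosSemidef.det_le_trace_div_card_pow {A : Matrix n n ℝ} (hA : A.PosSemidef) :
    A.det ≤ (A.trace / Fintype.card n) ^ Fintype.card n := by
  simpa [hA.isHermitian.det_eq_prod_eigenvalues, hA.isHermitian.trace_eq_sum_eigenvalues]
    using Real.prod_le_sum_div_card_pow hA.eigenvalues_nonneg

theorem det_add_vecMulVec {A : Matrix n n ℝ} (hA : IsUnit A.det) (u v : n → ℝ) :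
    (A + vecMulVec u v).det = A.det * (1 + v ⬝ᵥ (A⁻¹ *ᵥ u)) := by
  rw [vecMulVec_eq Unit, det_add_replicateCol_mul_replicateRow hA, Matrix.mul_assoc,
    ← replicateCol_mulVec, det_unique (1 + _)]
  rfl

theorem dotProduct_inv_mulVec_le {A : Matrix n n ℝ} (hA : IsUnit A.det) {lam : ℝ} (hlam : 0 < lam)
    (hlow : ∀ x, lam * (x ⬝ᵥ x) ≤ x ⬝ᵥ (A *ᵥ x)) (v : n → ℝ) :
    v ⬝ᵥ (A⁻¹ *ᵥ v) ≤ (v ⬝ᵥ v) / lam := by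
  set y := A⁻¹ *ᵥ v
  have hAy : A *ᵥ y = v := by simp [y, mulVec_mulVec, mul_nonsing_inv _ hA]
  have hy : lam * (y ⬝ᵥ y) ≤ v ⬝ᵥ y := by simpa [hAy, dotProduct_comm] using hlow y
  -- `0 ≤ ‖v - λ y‖² = ‖v‖² - 2λ⟪v, y⟫ + λ²‖y‖² ≤ ‖v‖² - λ⟪v, y⟫` by `hy`
  have hsq : 0 ≤ (v - lam • y) ⬝ᵥ (v - lam • y) := dotProduct_self_star_nonneg _
  simp only [sub_dotProduct, dotProduct_sub, smul_dotProduct, dotProduct_smul, smul_eq_mul,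
    dotProduct_comm y v] at hsq
  rw [le_div_iff₀ hlam]
  nlinarith

end Matrix

section DesignMatrix

variable {n : Type*} [DecidableEq n] {lam : ℝ} {g : ℕ → n → ℝ}

def designMatrix (lam : ℝ) (g : ℕ → n → ℝ) (t : ℕ) : Matrix n n ℝ :=
  lam • 1 + ∑ i ∈ Ico 1 t, vecMulVec (g i) (g i)

theorem designMatrix_succ {t : ℕ} (ht : 1 ≤ t) :
    designMatrix lam g (t + 1) = designMatrix lam g t + vecMulVec (g t) (g t) := by
  rw [designMatrix, designMatrix, sum_Ico_succ_top ht, add_assoc]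

variable [Fintype n]

theorem le_dotProduct_designMatrix_mulVec (t : ℕ) (x : n → ℝ) :
    lam * (x ⬝ᵥ x) ≤ x ⬝ᵥ (designMatrix lam g t *ᵥ x) := by
  have h := (posSemidef_sum_vecMulVec_self (Ico 1 t) g).dotProduct_mulVec_nonneg x
  simp only [star_trivial] at h
  simp only [designMatrix, add_mulVec, dotProduct_add, smul_mulVec, one_mulVec, dotProduct_smul,
    smul_eq_mul]
  linarith

theorem designMatrix_posDef (hlam : 0 < lam) (t : ℕ) : (designMatrix lam g t).PosDef :=
  (PosDef.one.smul hlam).add_posSemidef (posSemidef_sum_vecMulVec_self _ g)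

theorem det_designMatrix_succ (hlam : 0 < lam) {t : ℕ} (ht : 1 ≤ t) :
    (designMatrix lam g (t + 1)).det =
      (designMatrix lam g t).det * (1 + g t ⬝ᵥ ((designMatrix lam g t)⁻¹ *ᵥ g t)) := by
  rw [designMatrix_succ ht, det_add_vecMulVec (designMatrix_posDef hlam t).det_pos.ne'.isUnit]

theorem dotProduct_inv_designMatrix_mulVec_nonneg (hlam : 0 < lam) (t : ℕ) :
    0 ≤ g t ⬝ᵥ ((designMatrix lam g t)⁻¹ *ᵥ g t) := by
  simpa using (designMatrix_posDef hlam t).inv.posSemidef.dotProduct_mulVec_nonneg (g t)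

theorem log_det_designMatrix (hlam : 0 < lam) (N : ℕ) :
    Real.log (designMatrix lam g (N + 1)).det = Fintype.card n * Real.log lam +
      ∑ t ∈ Icc 1 N, Real.log (1 + g t ⬝ᵥ ((designMatrix lam g t)⁻¹ *ᵥ g t)) := by
  induction N with
  | zero => simp [designMatrix, Real.log_pow]
  | succ N ih =>
    have hw := dotProduct_inv_designMatrix_mulVec_nonneg (g := g) hlam (N + 1)
    rw [det_designMatrix_succ hlam (by omega), Real.log_mul (designMatrix_posDef hlam _).det_pos.ne'
      (by positivity), ih, sum_Icc_succ_top (by omega)]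
    ring

theorem trace_designMatrix (t : ℕ) :
    (designMatrix lam g t).trace = Fintype.card n * lam + ∑ i ∈ Ico 1 t, g i ⬝ᵥ g i := by
  simp [designMatrix, trace_sum, vecMulVec_eq Unit, trace_replicateCol_mul_replicateRow, mul_comm]

theorem det_designMatrix_succ_le (hlam : 0 < lam) (N : ℕ) :
    (designMatrix lam g (N + 1)).det ≤
      (lam + (∑ i ∈ Icc 1 N, g i ⬝ᵥ g i) / Fintype.card n) ^ Fintype.card n := by
  rcases Nat.eq_zero_or_pos (Fintype.card n) with h | h
  · have := Fintype.card_eq_zero_iff.mp h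
    simp
  refine (designMatrix_posDef hlam _).posSemidef.det_le_trace_div_card_pow.trans_eq ?_
  rw [trace_designMatrix, Finset.Ico_add_one_right_eq_Icc]
  field_simp

theorem sum_log_one_add_dotProduct_inv_designMatrix_mulVec_le (hlam : 0 < lam) (N : ℕ) :
    ∑ t ∈ Icc 1 N, Real.log (1 + g t ⬝ᵥ ((designMatrix lam g t)⁻¹ *ᵥ g t)) ≤
      Fintype.card n * Real.log (1 + (∑ i ∈ Icc 1 N, g i ⬝ᵥ g i) / (Fintype.card n * lam)) := by
  set d : ℝ := (Fintype.card n : ℝ)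
  set s := ∑ i ∈ Icc 1 N, g i ⬝ᵥ g i
  have hs : 0 ≤ s := sum_nonneg fun i _ ↦ dotProduct_self_star_nonneg (g i)
  have hfactor : lam + s / d = lam * (1 + s / (d * lam)) := by
    rw [mul_add, mul_one, ← mul_div_assoc, mul_comm lam s, mul_div_mul_right _ _ hlam.ne']
  have hS := designMatrix_posDef (g := g) hlam (N + 1)
  have hdet := Real.log_le_log hS.det_pos (det_designMatrix_succ_le hlam N)
  rw [Real.log_pow, hfactor, Real.log_mul hlam.ne' (by positivity), log_det_designMatrix hlam] at hdet
  linarith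

theorem sum_dotProduct_inv_designMatrix_mulVec_le (hlam : 0 < lam) {c : ℝ} (hc : c ≤ 2 * lam)
    {T : ℕ} (hg : ∀ t ∈ Icc 1 T, g t ⬝ᵥ g t ≤ c) :
    ∑ t ∈ Icc 1 T, g t ⬝ᵥ ((designMatrix lam g t)⁻¹ *ᵥ g t) ≤
      2 * Fintype.card n * Real.log (1 + T * c / (Fintype.card n * lam)) := by
  have hsum : ∑ t ∈ Icc 1 T, g t ⬝ᵥ g t ≤ T * c := by
    simpa using sum_le_sum hg
  have hw_le : ∀ t ∈ Icc 1 T, g t ⬝ᵥ ((designMatrix lam g t)⁻¹ *ᵥ g t) ≤ 2 := fun t ht ↦ by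
    have h := dotProduct_inv_mulVec_le (designMatrix_posDef (g := g) hlam t).det_pos.ne'.isUnit hlam
      (le_dotProduct_designMatrix_mulVec t) (g t)
    rw [le_div_iff₀ hlam] at h
    nlinarith [hg t ht]
  calc ∑ t ∈ Icc 1 T, g t ⬝ᵥ ((designMatrix lam g t)⁻¹ *ᵥ g t)
      ≤ ∑ t ∈ Icc 1 T, 2 * Real.log (1 + g t ⬝ᵥ ((designMatrix lam g t)⁻¹ *ᵥ g t)) :=
        sum_le_sum fun t ht ↦ Real.le_two_mul_log_one_add
          (dotProduct_inv_designMatrix_mulVec_nonneg hlam t) (hw_le t ht)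
    _ = 2 * ∑ t ∈ Icc 1 T, Real.log (1 + g t ⬝ᵥ ((designMatrix lam g t)⁻¹ *ᵥ g t)) :=
        (mul_sum ..).symm
    _ ≤ 2 * (Fintype.card n *
          Real.log (1 + (∑ i ∈ Icc 1 T, g i ⬝ᵥ g i) / (Fintype.card n * lam))) := by
        gcongr
        exact sum_log_one_add_dotProduct_inv_designMatrix_mulVec_le hlam T
    _ ≤ 2 * Fintype.card n * Real.log (1 + T * c / (Fintype.card n * lam)) := by
        rw [← mul_assoc]
        gcongr
        exact add_pos_of_pos_of_nonneg one_pos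
          (div_nonneg (sum_nonneg fun i _ ↦ dotProduct_self_star_nonneg (g i)) (by positivity))

end DesignMatrix

theorem sq_le_of_le_two_mul_sqrt_mul_sqrt_add {r β β' w c : ℝ} (hr : 0 ≤ r) (hβ : 0 ≤ β)
    (hββ' : β ≤ β') (hw : 0 ≤ w) (h : r ≤ 2 * √β * √w + 2 * β * c) :
    r ^ 2 ≤ 8 * β' * w + 8 * β' ^ 2 * c ^ 2 := by
  calc r ^ 2 ≤ (2 * √β * √w + 2 * β * c) ^ 2 := pow_le_pow_left₀ hr h 2
    _ ≤ 8 * β * w + 8 * β ^ 2 * c ^ 2 := by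
        nlinarith [Real.sq_sqrt hβ, Real.sq_sqrt hw, sq_nonneg (√β * √w - β * c)]
    _ ≤ 8 * β' * w + 8 * β' ^ 2 * c ^ 2 := by gcongr

theorem sum_sq_regret_bound_general
    (d : ℕ) (Cg lam Ch : ℝ) (hCg : 0 < Cg) (hlam : Cg ^ 2 ≤ lam)
    (T : ℕ) (hT : 1 ≤ T) (g : ℕ → Fin d → ℝ)
    (hg : ∀ t, 1 ≤ t → t ≤ T → Real.sqrt (g t ⬝ᵥ g t) ≤ Cg)
    (S : ℕ → Matrix (Fin d) (Fin d) ℝ)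
    (hS : ∀ t, S t = lam • (1 : Matrix (Fin d) (Fin d) ℝ) +
      ∑ i ∈ Finset.Ico 1 t, vecMulVec (g i) (g i))
    (u : ℕ → ℝ)
    (hu : ∀ t, u t = Real.sqrt (g t ⬝ᵥ ((S t)⁻¹ *ᵥ g t)))
    (β : ℕ → ℝ) (hβ1 : 0 < β 1)
    (hβmono : ∀ s t, 1 ≤ s → s ≤ t → t ≤ T → β s ≤ β t)
    (r : ℕ → ℝ) (hr0 : ∀ t, 1 ≤ t → t ≤ T → 0 ≤ r t)
    (hr : ∀ t, 1 ≤ t → t ≤ T → r t ≤ 2 * Real.sqrt (β t) * u t + 2 * β t * Ch / lam) :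
    ∑ t ∈ Finset.Icc 1 T, r t ^ 2 ≤
      16 * β T * d * Real.log (1 + T * Cg ^ 2 / (d * lam)) +
        8 * β T ^ 2 * Ch ^ 2 * T / lam ^ 2 := by
  have hlam0 : 0 < lam := (pow_pos hCg 2).trans_le hlam
  obtain rfl : S = designMatrix lam g := funext hS
  have hgg : ∀ t ∈ Icc 1 T, g t ⬝ᵥ g t ≤ Cg ^ 2 := fun t ht ↦
    (Real.sqrt_le_left hCg.le).mp (hg t (mem_Icc.mp ht).1 (mem_Icc.mp ht).2)
  have hterm : ∀ t ∈ Icc 1 T, r t ^ 2 ≤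
      8 * β T * (g t ⬝ᵥ ((designMatrix lam g t)⁻¹ *ᵥ g t)) + 8 * β T ^ 2 * (Ch / lam) ^ 2 := by
    intro t ht
    obtain ⟨ht1, htT⟩ := mem_Icc.mp ht
    refine sq_le_of_le_two_mul_sqrt_mul_sqrt_add (hr0 t ht1 htT)
      (hβ1.le.trans (hβmono 1 t le_rfl ht1 htT)) (hβmono t T ht1 htT le_rfl)
      (dotProduct_inv_designMatrix_mulVec_nonneg hlam0 t) ?_
    rw [← hu t, ← mul_div_assoc]
    exact hr t ht1 htT
  have hpot := sum_dotProduct_inv_designMatrix_mulVec_le hlam0 (by linarith) hgg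
  simp only [Fintype.card_fin] at hpot
  have hβT : 0 ≤ β T := hβ1.le.trans (hβmono 1 T le_rfl hT le_rfl)
  calc ∑ t ∈ Icc 1 T, r t ^ 2
      ≤ ∑ t ∈ Icc 1 T, (8 * β T * (g t ⬝ᵥ ((designMatrix lam g t)⁻¹ *ᵥ g t)) +
          8 * β T ^ 2 * (Ch / lam) ^ 2) := sum_le_sum hterm
    _ = 8 * β T * ∑ t ∈ Icc 1 T, g t ⬝ᵥ ((designMatrix lam g t)⁻¹ *ᵥ g t) +
          T * (8 * β T ^ 2 * (Ch / lam) ^ 2) := by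
        rw [sum_add_distrib, ← mul_sum, sum_const, Nat.card_Icc, nsmul_eq_mul]
        simp
    _ ≤ 8 * β T * (2 * d * Real.log (1 + T * Cg ^ 2 / (d * lam))) +
          T * (8 * β T ^ 2 * (Ch / lam) ^ 2) := by gcongr
    _ = _ := by ring

/-- Sum of squared instantaneous regrets (deterministic core of Lemma 5.8):
if `r_t ≤ 2√(β_t) u_t + 2β_t C_h/λ` with `u_t = ‖g_t‖_{Σ_t⁻¹}`, `β` positive
nondecreasing, `‖g_t‖₂ ≤ C_g` and `λ ≥ C_g²`, then
`∑_{t=1}^T r_t² ≤ 16 β_T d log(1 + T C_g²/(d λ)) + 8 β_T² C_h² T / λ²`. -/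
theorem sum_sq_regret_bound
    (d : ℕ) (hd : 1 ≤ d) (Cg lam Ch : ℝ) (hCg : 0 < Cg) (hlam : Cg ^ 2 ≤ lam)
    (hCh : 0 ≤ Ch)
    (T : ℕ) (hT : 1 ≤ T) (g : ℕ → Fin d → ℝ)
    (hg : ∀ t, 1 ≤ t → t ≤ T → Real.sqrt (g t ⬝ᵥ g t) ≤ Cg)
    (S : ℕ → Matrix (Fin d) (Fin d) ℝ)
    (hS : ∀ t, S t = lam • (1 : Matrix (Fin d) (Fin d) ℝ) +
      ∑ i ∈ Finset.Ico 1 t, vecMulVec (g i) (g i))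
    (u : ℕ → ℝ)
    (hu : ∀ t, u t = Real.sqrt (g t ⬝ᵥ ((S t)⁻¹ *ᵥ g t)))
    (β : ℕ → ℝ) (hβ1 : 0 < β 1)
    (hβmono : ∀ s t, 1 ≤ s → s ≤ t → t ≤ T → β s ≤ β t)
    (r : ℕ → ℝ) (hr0 : ∀ t, 1 ≤ t → t ≤ T → 0 ≤ r t)
    (hr : ∀ t, 1 ≤ t → t ≤ T → r t ≤ 2 * Real.sqrt (β t) * u t + 2 * β t * Ch / lam) :
    ∑ t ∈ Finset.Icc 1 T, r t ^ 2 ≤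
      16 * β T * d * Real.log (1 + T * Cg ^ 2 / (d * lam)) +
        8 * β T ^ 2 * Ch ^ 2 * T / lam ^ 2 :=
  sum_sq_regret_bound_general d Cg lam Ch hCg hlam T hT g hg S hS u hu β hβ1 hβmono r hr0 hr
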